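/- Let E_1,...,E_{n+1} be exchangeable real-valued random variables (i.e., their joint distribution is invariant under permutations). Let Q̂ be the ⌈(1−α)(n+1)⌉-th smallest value among E_1,...,E_n, where α ∈ (0,1) and ⌈(1−α)(n+1)⌉ ≤ n. Then P(E_{n+1} ≤ Q̂) ≥ 1 − α. -/

import Mathlib

/-! Let `A j` be the event that fewer than `r = ⌈(1 - α)(n + 1)⌉` scores lie strictly below `E j`.
Swapping `j` with the test index shows, by exchangeability, that all `A j` have the same
probability. Every outcome lies in at least `r` of them (the first `r` indices in sorted order
do), so `r ≤ (n + 1) P(A (last n))`; and `A (last n)` is exactly the coverage event. -/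

open MeasureTheory

/-- The `r`-th smallest element (1-indexed) of a list of reals. -/
noncomputable def kthSmallest (l : List ℝ) (r : ℕ) : ℝ :=
  (l.insertionSort (· ≤ ·)).getD (r - 1) 0

open Finset

theorem List.countP_ofFn {α : Type*} {n : ℕ} (f : Fin n → α) (p : α → Bool) :
    (List.ofFn f).countP p = #{i | p (f i)} := by
  induction n with
  | zero => simp
  | succ n ih => simp [List.ofFn_succ, List.countP_cons, Fin.card_filter_univ_succ', ih, add_comm]

theorem List.countP_eq_card_filter_get {α : Type*} (l : List α) (p : α → Bool) :
    l.countP p = #{i | p (l.get i)} := by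
  conv_lhs => rw [← List.ofFn_get l]
  exact List.countP_ofFn _ p

theorem le_kthSmallest_iff (l : List ℝ) {r : ℕ} (hr₀ : 1 ≤ r) (hr : r ≤ l.length) (x : ℝ) :
    x ≤ kthSmallest l r ↔ l.countP (· < x) < r := by
  rw [kthSmallest]
  have hperm := List.perm_insertionSort (· ≤ ·) l
  have hsorted : (l.insertionSort (· ≤ ·)).SortedLE := List.sortedLE_insertionSort
  generalize l.insertionSort (· ≤ ·) = s at hperm hsorted ⊢
  have hk : r - 1 < s.length := by rw [hperm.length_eq]; omega
  have hrank := Tuple.lt_card_lt_iff_apply_lt_of_monotone (j := ⟨r - 1, hk⟩) (a := x)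
    hsorted.monotone_get
  rw [List.getD_eq_getElem _ _ hk, ← hperm.countP_eq, s.countP_eq_card_filter_get, ← not_lt]
  simp only [decide_eq_true_eq, List.get_eq_getElem] at hrank ⊢
  rw [← hrank]
  omega

section StrictRank

variable {ι α : Type*} [Fintype ι] [LinearOrder α]

def strictRank (v : ι → α) (j : ι) : ℕ := #{i | v i < v j}

theorem strictRank_comp_equiv {κ : Type*} [Fintype κ] (v : ι → α) (e : κ ≃ ι) (j : κ) :
    strictRank (v ∘ e) j = strictRank v (e j) :=
  Finset.card_equiv e (by simp)

theorem strictRank_last {n : ℕ} (v : Fin (n + 1) → α) :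
    strictRank v (Fin.last n) = #{i : Fin n | v i.castSucc < v (Fin.last n)} := by
  rw [strictRank, card_filter, card_filter, Fin.sum_univ_castSucc]
  simp

theorem le_card_filter_strictRank_lt (v : ι → α) {r : ℕ} (hr : r ≤ Fintype.card ι) :
    r ≤ #{j | strictRank v j < r} := by
  obtain ⟨τ, hτ⟩ : ∃ τ : Fin (Fintype.card ι) ≃ ι, Monotone (v ∘ τ) :=
    let e := (Fintype.equivFin ι).symm
    ⟨(Tuple.sort (v ∘ e)).trans e, Tuple.monotone_sort (v ∘ e)⟩
  have hrank (k : Fin (Fintype.card ι)) : strictRank v (τ k) ≤ k := by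
    rw [← strictRank_comp_equiv]
    exact not_lt.1 ((Tuple.lt_card_lt_iff_apply_lt_of_monotone hτ).not.2 (lt_irrefl _))
  simpa using Finset.card_le_card_of_injOn (s := univ) (fun k : Fin r => τ (Fin.castLE hr k))
    (fun k _ => by simpa using (hrank _).trans_lt k.isLt)
    (fun k _ l _ h => Fin.castLE_injective hr (τ.injective h))

variable [MeasurableSpace α] [TopologicalSpace α] [OpensMeasurableSpace α] [OrderClosedTopology α]
  [SecondCountableTopology α]

theorem measurable_strictRank (j : ι) :
    Measurable fun v : ι → α => strictRank v j := by
  simp only [strictRank, card_filter]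
  exact Finset.measurable_sum _ fun i _ => Measurable.ite
    (measurableSet_lt (measurable_pi_apply i) (measurable_pi_apply j)) measurable_const
    measurable_const

theorem measure_strictRank_lt_eq {Ω : Type*} [MeasurableSpace Ω] (μ : Measure Ω)
    {X : ι → Ω → α} (hX : ∀ i, Measurable (X i))
    (hexch : ∀ σ : Equiv.Perm ι, μ.map (fun ω i => X (σ i) ω) = μ.map (fun ω i => X i ω))
    (r : ℕ) (j j' : ι) :
    μ {ω | strictRank (X · ω) j < r} = μ {ω | strictRank (X · ω) j' < r} := by
  classical
  have hS : MeasurableSet {v : ι → α | strictRank v j' < r} :=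
    measurable_strictRank j' measurableSet_Iio
  have hswap : {ω | strictRank (X · ω) j < r}
      = (fun ω i => X (Equiv.swap j j' i) ω) ⁻¹' {v | strictRank v j' < r} := by
    ext ω
    change _ < r ↔ strictRank ((X · ω) ∘ Equiv.swap j j') j' < r
    rw [strictRank_comp_equiv, Equiv.swap_apply_right]
  rw [hswap, ← Measure.map_apply (measurable_pi_lambda _ fun i => hX _) hS, hexch,
    Measure.map_apply (measurable_pi_lambda _ hX) hS]
  rfl

end StrictRank

open scoped ENNReal

open Classical in
theorem natCast_mul_measure_univ_le_sum_measure {Ω ι : Type*} [MeasurableSpace Ω] [Fintype ι]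
    (μ : Measure Ω) {A : ι → Set Ω} (hA : ∀ j, MeasurableSet (A j)) {r : ℕ}
    (hcover : ∀ ω, r ≤ #{j | ω ∈ A j}) :
    r * μ Set.univ ≤ ∑ j, μ (A j) :=
  calc (r : ℝ≥0∞) * μ Set.univ = ∫⁻ _, (r : ℝ≥0∞) ∂μ := (lintegral_const _).symm
    _ ≤ ∫⁻ ω, ∑ j, (A j).indicator 1 ω ∂μ := lintegral_mono fun ω => by
        simpa [Set.indicator_apply] using hcover ω
    _ = ∑ j, μ (A j) := by
        rw [lintegral_finsetSum _ fun j _ => measurable_one.indicator (hA j)]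
        simp [lintegral_indicator_one (hA _)]

theorem split_conformal_coverage
    {Ω : Type*} [MeasurableSpace Ω] (P : Measure Ω) [IsProbabilityMeasure P]
    (n : ℕ) (E : Fin (n + 1) → Ω → ℝ) (hmeas : ∀ i, Measurable (E i))
    (hexch : ∀ σ : Equiv.Perm (Fin (n + 1)),
      Measure.map (fun ω (i : Fin (n + 1)) => E (σ i) ω) P
        = Measure.map (fun ω (i : Fin (n + 1)) => E i ω) P)
    (α : ℝ) (hα : α ∈ Set.Ioo (0:ℝ) 1)
    (hrank : ⌈(1 - α) * (n + 1 : ℝ)⌉₊ ≤ n) :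
    ENNReal.ofReal (1 - α)
      ≤ P {ω | E (Fin.last n) ω
            ≤ kthSmallest (List.ofFn fun i : Fin n => E i.castSucc ω)
                ⌈(1 - α) * (n + 1 : ℝ)⌉₊} := by
  set r := ⌈(1 - α) * (n + 1 : ℝ)⌉₊
  have hα₁ : 0 < 1 - α := by linarith [hα.2]
  have hr₀ : 1 ≤ r := Nat.ceil_pos.2 (by positivity)
  let A : Fin (n + 1) → Set Ω := fun j => {ω | strictRank (E · ω) j < r}
  have hA (j) : MeasurableSet (A j) :=
    (measurable_strictRank j).comp (measurable_pi_lambda _ hmeas) measurableSet_Iio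
  have hcover := natCast_mul_measure_univ_le_sum_measure P hA (r := r) fun ω => by
    simpa [A] using le_card_filter_strictRank_lt (E · ω) (r := r) (by simp; omega)
  have hsum : (r : ℝ≥0∞) ≤ (n + 1) * P (A (Fin.last n)) := by
    simpa [A, measure_strictRank_lt_eq P hmeas hexch r _ (Fin.last n)] using hcover
  have hevent : {ω | E (Fin.last n) ω
      ≤ kthSmallest (List.ofFn fun i : Fin n => E i.castSucc ω) r} = A (Fin.last n) := by
    ext ω
    rw [Set.mem_ofPred, le_kthSmallest_iff _ hr₀ (by simpa using hrank), List.countP_ofFn]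
    simp [A, strictRank_last]
  rw [hevent, ← ENNReal.mul_le_mul_iff_right (a := n + 1) (by positivity) (by simp)]
  calc (n + 1) * ENNReal.ofReal (1 - α) = ENNReal.ofReal ((1 - α) * (n + 1)) := by
        rw [mul_comm, ENNReal.ofReal_mul hα₁.le]; norm_cast
    _ ≤ r := ENNReal.ofReal_le_of_le_toReal (by simpa using Nat.le_ceil _)
    _ ≤ (n + 1) * P (A (Fin.last n)) := hsum
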